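/- The point P₇ = (1-b², b², z₅) with z₅ = (1-β+γ)/(1+α-β+γ) is a critical point of the event-horizon autonomous system (assuming 0 < b ≤ 1, 1+α-β+γ ≠ 0, 0 ≤ z₅ < 1). -/

import Mathlib

/-! On the horizon `y = b²` the factor `1 + √y / b` equals `2`, and the choice of `z₅` makes the
common coefficient `1 + 3β - 3γ + 3αz/(1 - z)` equal to `4`; each component of the vector field
then reduces to a multiple of `1 - x - y`, which vanishes at `x = 1 - b²`. -/

/-- Vector field of the Model 2 autonomous system with future event horizon IR cutoff. -/
noncomputable def Gev (α β γ b : ℝ) (p : ℝ × ℝ × ℝ) : ℝ × ℝ × ℝ :=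
  let x := p.1; let y := p.2.1; let z := p.2.2
  (x * ((1 + 3 * β - 3 * γ + 3 * α * z / (1 - z)) * (1 - x)
        - 2 * y * (1 + Real.sqrt y / b)),
   y * (2 * (1 - y) * (1 + Real.sqrt y / b)
        - x * (1 + 3 * β - 3 * γ + 3 * α * z / (1 - z))),
   z * (1 - z) / 2 *
     (4 - 2 * y * (1 + Real.sqrt y / b)
        - x * (1 + 3 * β - 3 * γ + 3 * α * z / (1 - z))))

theorem sub_mul_div_div_one_sub_div {N D : ℝ} (hD : D ≠ 0) (hND : N / D ≠ 1) :
    (D - N) * (N / D) / (1 - N / D) = N := by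
  have hDN : D - N ≠ 0 := fun h => hND (by rw [← sub_eq_zero.mp h, div_self hD])
  field_simp

theorem Gev_eq_zero_of_add_eq_one {α β γ b x z : ℝ} (hb : 0 < b)
    (hcoeff : 1 + 3 * β - 3 * γ + 3 * α * z / (1 - z) = 4) (hxy : x + b ^ 2 = 1) :
    Gev α β γ b (x, b ^ 2, z) = 0 := by
  have hx : x = 1 - b ^ 2 := by linarith
  simp only [Gev, hcoeff, Real.sqrt_sq hb.le, div_self hb.ne', hx]
  ext <;> simp only [Prod.fst_zero, Prod.snd_zero] <;> ring

theorem P7_critical_point_general (α β γ b : ℝ) (hb0 : 0 < b)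
    (hden : 1 + α - β + γ ≠ 0)
    (hz1 : (1 - β + γ) / (1 + α - β + γ) < 1) :
    Gev α β γ b (1 - b ^ 2, b ^ 2, (1 - β + γ) / (1 + α - β + γ)) = 0 := by
  have hratio := sub_mul_div_div_one_sub_div hden hz1.ne
  rw [show 1 + α - β + γ - (1 - β + γ) = α by ring] at hratio
  exact Gev_eq_zero_of_add_eq_one hb0 (by linear_combination 3 * hratio) (sub_add_cancel 1 _)

theorem P7_critical_point (α β γ b : ℝ) (hb0 : 0 < b) (hb1 : b ≤ 1)
    (hden : 1 + α - β + γ ≠ 0)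
    (hz0 : 0 ≤ (1 - β + γ) / (1 + α - β + γ))
    (hz1 : (1 - β + γ) / (1 + α - β + γ) < 1) :
    Gev α β γ b (1 - b ^ 2, b ^ 2, (1 - β + γ) / (1 + α - β + γ)) = 0 :=
  P7_critical_point_general α β γ b hb0 hden hz1
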